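/- Let (X, 𝒢, ℬ) be a transversal design TD(k,n) with k ≥ 2 and n ≥ 1. For each x ∈ X, let C_x denote the identity submatrix of the transpose incidence matrix C with row set B_x and with row A matched to column next(A,x) for each A ∈ B_x. Then the family {C_x : x ∈ X} is a non-overlapping identity submatrix cover of C: every one-entry (A,y) of C (i.e., every pair with y ∈ A ∈ ℬ) is covered by exactly one member C_x, namely the one with x the unique point of A for which y = next(A,x). This cover consists of kn identity submatrices, each of size n. -/
import Mathlib


/-- `IsIdentitySubmatrix M validCols R σ` : the row set `R`, with row `u` matched to
column `σ u`, forms an identity submatrix of the binary matrix `M` (where the entry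
in row `u` and column `f` is `1` iff `M u f` holds), whose column index set is
`validCols`. -/
def IsIdentitySubmatrix {U F : Type*} (M : U → F → Prop) (validCols : Set F)
    (R : Finset U) (σ : U → F) : Prop :=
  (∀ u ∈ R, σ u ∈ validCols) ∧ Set.InjOn σ ↑R ∧ (∀ u ∈ R, M u (σ u)) ∧
    ∀ u ∈ R, ∀ u' ∈ R, u ≠ u' → ¬ M u (σ u')

theorem stmt8 (k n : ℕ) (hk : 2 ≤ k) (hn : 1 ≤ n)
    (X : Type*) [Fintype X] [DecidableEq X] (hX : Fintype.card X = k * n)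
    (𝒢 : Fin k → Finset X)
    (hGcard : ∀ i, (𝒢 i).card = n)
    (hGpart : ∀ x : X, ∃! i, x ∈ 𝒢 i)
    (ℬ : Finset (Finset X))
    (hBcard : ∀ A ∈ ℬ, A.card = k)
    (hTD : ∀ x y : X, x ≠ y →
      (((∃! i, x ∈ 𝒢 i ∧ y ∈ 𝒢 i) ∧ ¬ ∃ A ∈ ℬ, x ∈ A ∧ y ∈ A) ∨
       ((¬ ∃ i, x ∈ 𝒢 i ∧ y ∈ 𝒢 i) ∧ (∃! A, A ∈ ℬ ∧ x ∈ A ∧ y ∈ A))))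
    -- `gi x` is the (unique) index of the group containing `x`
    (gi : X → Fin k) (hgi : ∀ x : X, x ∈ 𝒢 (gi x))
    -- `nxt A x = next(A,x)` is the unique point of the block `A` lying in the
    -- group whose index follows (mod k) that of the group containing `x`
    (nxt : Finset X → X → X)
    (hnxt : ∀ A ∈ ℬ, ∀ x ∈ A, nxt A x ∈ A ∧
      nxt A x ∈ 𝒢 ⟨((gi x).val + 1) % k, Nat.mod_lt _ (by omega)⟩) :
    -- each C_x is an identity submatrix of the transpose incidence matrix C
    (∀ x : X,
      IsIdentitySubmatrix (fun (A : Finset X) (y : X) => y ∈ A) Set.univ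
        (ℬ.filter (fun A => x ∈ A)) (fun A => nxt A x)) ∧
    -- every one-entry (A,y) of C is covered by exactly one C_x, namely the one
    -- with x the unique point of A for which y = next(A,x)
    (∀ A ∈ ℬ, ∀ y ∈ A,
      (∃! x : X, A ∈ ℬ.filter (fun A' => x ∈ A') ∧
        ∃ A' ∈ ℬ.filter (fun A'' => x ∈ A''), y = nxt A' x) ∧
      (∀ x : X, (A ∈ ℬ.filter (fun A' => x ∈ A') ∧
        ∃ A' ∈ ℬ.filter (fun A'' => x ∈ A''), y = nxt A' x) →
        x ∈ A ∧ y = nxt A x)) ∧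
    -- the cover consists of kn identity submatrices
    (Fintype.card X = k * n) ∧
    -- each of size n
    (∀ x : X, (ℬ.filter (fun A => x ∈ A)).card = n) := by

  have huniq : ∀ (x : X) (i : Fin k), x ∈ 𝒢 i → i = gi x := by
    intro x i hi
    obtain ⟨j, hj, hu⟩ := hGpart x
    rw [hu i hi, hu (gi x) (hgi x)]
  have blk_uniq : ∀ x y : X, x ≠ y → ∀ A A', A ∈ ℬ → A' ∈ ℬ →
      x ∈ A → y ∈ A → x ∈ A' → y ∈ A' → A = A' := by
    intro x y hxy A A' hA hA' hxA hyA hxA' hyA'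
    rcases hTD x y hxy with ⟨_, hno⟩ | ⟨_, B, _, hu⟩
    · exact absurd ⟨A, hA, hxA, hyA⟩ hno
    · rw [hu A ⟨hA, hxA, hyA⟩, hu A' ⟨hA', hxA', hyA'⟩]
  have grp_ne : ∀ A ∈ ℬ, ∀ x ∈ A, ∀ y ∈ A, x ≠ y → gi x ≠ gi y := by
    intro A hA x hxA y hyA hxy hg
    rcases hTD x y hxy with ⟨_, hno⟩ | ⟨hno, _⟩
    · exact hno ⟨A, hA, hxA, hyA⟩
    · exact hno ⟨gi x, hgi x, by rw [hg]; exact hgi y⟩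
  have nxt_gi : ∀ A ∈ ℬ, ∀ x ∈ A, (gi (nxt A x)).val = ((gi x).val + 1) % k := by
    intro A hA x hx
    have h := huniq _ _ (hnxt A hA x hx).2
    rw [← h]
  have mod_ne : ∀ v : ℕ, v < k → (v + 1) % k ≠ v := by
    intro v hv
    rcases Nat.lt_or_ge (v + 1) k with h | h
    · rw [Nat.mod_eq_of_lt h]; omega
    · have hvk : v + 1 = k := by omega
      rw [hvk, Nat.mod_self]; omega
  have mod_inj : ∀ a b : ℕ, a < k → b < k → (a + 1) % k = (b + 1) % k → a = b := by
    intro a b ha hb h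
    rcases Nat.lt_or_ge (a + 1) k with h1 | h1 <;> rcases Nat.lt_or_ge (b + 1) k with h2 | h2
    · rw [Nat.mod_eq_of_lt h1, Nat.mod_eq_of_lt h2] at h; omega
    · have hb1 : b + 1 = k := by omega
      rw [Nat.mod_eq_of_lt h1, hb1, Nat.mod_self] at h; omega
    · have ha1 : a + 1 = k := by omega
      rw [ha1, Nat.mod_self, Nat.mod_eq_of_lt h2] at h; omega
    · omega
  have nxt_ne : ∀ A ∈ ℬ, ∀ x ∈ A, nxt A x ≠ x := by
    intro A hA x hx h
    have h1 := nxt_gi A hA x hx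
    rw [h] at h1
    exact mod_ne _ (gi x).isLt h1.symm
  have nxt_mem : ∀ A ∈ ℬ, ∀ x ∈ A, nxt A x ∈ A := fun A hA x hx => (hnxt A hA x hx).1
  have part1 : ∀ x : X, IsIdentitySubmatrix (fun (A : Finset X) (y : X) => y ∈ A) Set.univ
      (ℬ.filter (fun A => x ∈ A)) (fun A => nxt A x) := by
    intro x
    refine ⟨fun _ _ => Set.mem_univ _, ?_, ?_, ?_⟩
    · intro A hA A' hA' heq
      simp only [Finset.mem_coe, Finset.mem_filter] at hA hA'
      have heq' : nxt A x = nxt A' x := heq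
      exact blk_uniq x (nxt A x) (Ne.symm (nxt_ne A hA.1 x hA.2)) A A' hA.1 hA'.1 hA.2
        (nxt_mem A hA.1 x hA.2) hA'.2 (by rw [heq']; exact nxt_mem A' hA'.1 x hA'.2)
    · intro A hA
      rw [Finset.mem_filter] at hA
      exact nxt_mem A hA.1 x hA.2
    · intro A hA A' hA' hne hmem
      rw [Finset.mem_filter] at hA hA'
      exact hne (blk_uniq x (nxt A' x) (Ne.symm (nxt_ne A' hA'.1 x hA'.2)) A A' hA.1 hA'.1
        hA.2 hmem hA'.2 (nxt_mem A' hA'.1 x hA'.2))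
  have cov : ∀ A ∈ ℬ, ∀ y ∈ A, ∀ x : X,
      (A ∈ ℬ.filter (fun A' => x ∈ A') ∧
        ∃ A' ∈ ℬ.filter (fun A'' => x ∈ A''), y = nxt A' x) → x ∈ A ∧ y = nxt A x := by
    rintro A hA y hy x ⟨hAf, A', hA'f, hyeq⟩
    rw [Finset.mem_filter] at hAf hA'f
    have hyA' : y ∈ A' := by rw [hyeq]; exact nxt_mem A' hA'f.1 x hA'f.2
    have hxy : x ≠ y := fun h => nxt_ne A' hA'f.1 x hA'f.2 (hyeq.symm.trans h.symm)
    have hAA : A' = A := blk_uniq x y hxy A' A hA'f.1 hAf.1 hA'f.2 hyA' hAf.2 hy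
    exact ⟨hAf.2, by rw [← hAA]; exact hyeq⟩
  have exist : ∀ A ∈ ℬ, ∀ y ∈ A, ∃ x ∈ A, y = nxt A x := by
    intro A hA y hy
    have hinj : Set.InjOn gi ↑A := by
      intro a ha b hb hab
      by_contra hne
      exact grp_ne A hA a ha b hb hne hab
    have himg : A.image gi = Finset.univ := by
      apply Finset.eq_univ_of_card
      rw [Finset.card_image_of_injOn hinj, hBcard A hA, Fintype.card_fin]
    have hj : (⟨((gi y).val + k - 1) % k, Nat.mod_lt _ (by omega)⟩ : Fin k) ∈ A.image gi := by
      rw [himg]; exact Finset.mem_univ _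
    obtain ⟨x, hxA, hgx⟩ := Finset.mem_image.mp hj
    refine ⟨x, hxA, ?_⟩
    have h1 := nxt_gi A hA x hxA
    have hval : (gi x).val = ((gi y).val + k - 1) % k := by rw [hgx]
    have h2 : ((gi x).val + 1) % k = (gi y).val := by
      rw [hval, Nat.mod_add_mod]
      have heq : (gi y).val + k - 1 + 1 = (gi y).val + k := by omega
      rw [heq, Nat.add_mod_right, Nat.mod_eq_of_lt (gi y).isLt]
    by_contra hne
    exact grp_ne A hA y hy (nxt A x) (nxt_mem A hA x hxA) hne (Fin.ext (h1.trans h2)).symm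
  refine ⟨part1, ?_, hX, ?_⟩
  · intro A hA y hy
    obtain ⟨x, hxA, hyx⟩ := exist A hA y hy
    refine ⟨⟨x, ⟨Finset.mem_filter.mpr ⟨hA, hxA⟩, A, Finset.mem_filter.mpr ⟨hA, hxA⟩, hyx⟩, ?_⟩,
      fun x' hx' => cov A hA y hy x' hx'⟩
    intro x' hx'
    obtain ⟨hx'A, hyx'⟩ := cov A hA y hy x' hx'
    by_contra hne
    have h1 := nxt_gi A hA x hxA
    have h2 := nxt_gi A hA x' hx'A
    rw [← hyx] at h1
    rw [← hyx'] at h2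
    exact grp_ne A hA x' hx'A x hxA hne
      (Fin.ext (mod_inj _ _ (gi x').isLt (gi x).isLt (h2.symm.trans h1)))
  · intro x
    have hU : (ℬ.filter (fun A => x ∈ A)).biUnion (fun A => A.erase x)
        = Finset.univ \ 𝒢 (gi x) := by
      ext y
      simp only [Finset.mem_biUnion, Finset.mem_filter, Finset.mem_erase, Finset.mem_sdiff,
        Finset.mem_univ, true_and]
      constructor
      · rintro ⟨A, ⟨hA, hxA⟩, hyx, hyA⟩
        intro hyG
        exact grp_ne A hA x hxA y hyA (Ne.symm hyx) (huniq y (gi x) hyG)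
      · intro hyG
        have hxy : x ≠ y := fun h => hyG (h ▸ hgi x)
        rcases hTD x y hxy with ⟨⟨i, ⟨hxi, hyi⟩, _⟩, _⟩ | ⟨_, B, ⟨hB, hxB, hyB⟩, _⟩
        · exact absurd (by rw [huniq x i hxi] at hyi; exact hyi) hyG
        · exact ⟨B, ⟨hB, hxB⟩, Ne.symm hxy, hyB⟩
    have hdisj : ∀ A ∈ ℬ.filter (fun A => x ∈ A), ∀ B ∈ ℬ.filter (fun A => x ∈ A),
        A ≠ B → Disjoint (A.erase x) (B.erase x) := by
      intro A hA B hB hAB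
      rw [Finset.mem_filter] at hA hB
      rw [Finset.disjoint_left]
      intro y hyA hyB
      rw [Finset.mem_erase] at hyA hyB
      exact hAB (blk_uniq x y (Ne.symm hyA.1) A B hA.1 hB.1 hA.2 hyA.2 hB.2 hyB.2)
    have hsum : ∀ A ∈ ℬ.filter (fun A => x ∈ A), (A.erase x).card = k - 1 := by
      intro A hA
      rw [Finset.mem_filter] at hA
      rw [Finset.card_erase_of_mem hA.2, hBcard A hA.1]
    have hcard1 : ((ℬ.filter (fun A => x ∈ A)).biUnion (fun A => A.erase x)).card
        = (ℬ.filter (fun A => x ∈ A)).card * (k - 1) := by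
      rw [Finset.card_biUnion hdisj, Finset.sum_congr rfl hsum, Finset.sum_const, smul_eq_mul]
    have hcard2 : (ℬ.filter (fun A => x ∈ A)).card * (k - 1) = n * (k - 1) := by
      rw [← hcard1, hU, Finset.card_sdiff_of_subset (Finset.subset_univ _), Finset.card_univ, hX,
        hGcard, ← Nat.sub_one_mul, mul_comm]
    exact Nat.eq_of_mul_eq_mul_right (by omega) hcard2
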